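/- If X has Left outcome L in misère play and X is not a starkiller, then Left, moving second, wins * + X; that is, the Right outcome of {0|0} + X is L. -/

import Mathlib

/-- Augmented (misère) game forms: finitely many Left and Right options,
    possibly adorned with a Left and/or Right tombstone marker. -/
inductive Aug : Type
  | mk (m n : ℕ) (L : Fin m → Aug) (R : Fin n → Aug) (tl tr : Bool) : Aug

namespace Aug

def numL : Aug → ℕ
  | mk m _ _ _ _ _ => m

def numR : Aug → ℕ
  | mk _ n _ _ _ _ => n

def moveL : (G : Aug) → Fin G.numL → Aug
  | mk _ _ L _ _ _ => L

def moveR : (G : Aug) → Fin G.numR → Aug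
  | mk _ _ _ R _ _ => R

def tombL : Aug → Bool
  | mk _ _ _ _ t _ => t

def tombR : Aug → Bool
  | mk _ _ _ _ _ t => t

instance : Zero Aug := ⟨mk 0 0 Fin.elim0 Fin.elim0 false false⟩

/-- Disjunctive sum of augmented forms (tombstones propagate to the sum). -/
protected noncomputable def add : Aug → Aug → Aug := by
  intro x
  induction x with
  | mk m n L R tl tr IHL IHR =>
    intro y
    induction y with
    | mk m' n' L' R' tl' tr' IHL' IHR' =>
      exact mk (m + m') (n + n')
        (Fin.addCases (motive := fun _ => Aug)
          (fun i => IHL i (mk m' n' L' R' tl' tr')) (fun j => IHL' j))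
        (Fin.addCases (motive := fun _ => Aug)
          (fun i => IHR i (mk m' n' L' R' tl' tr')) (fun j => IHR' j))
        (tl || tl') (tr || tr')

noncomputable instance : Add Aug := ⟨Aug.add⟩

/-- Conjugate: swap Left and Right throughout. -/
noncomputable def conj : Aug → Aug := by
  intro G
  induction G with
  | mk m n L R tl tr IHL IHR => exact mk n m IHR IHL tr tl

/-- A genuine game form: no tombstones anywhere. -/
def IsGame : Aug → Prop := by
  intro G
  induction G with
  | mk m n L R tl tr IHL IHR =>
    exact tl = false ∧ tr = false ∧ (∀ i, IHL i) ∧ (∀ j, IHR j)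

/-- Formal birthday (tombstones contribute nothing). -/
noncomputable def birthday : Aug → ℕ := by
  intro G
  induction G with
  | mk m n L R _ _ IHL IHR =>
    exact max (Finset.univ.sup fun i => IHL i + 1) (Finset.univ.sup fun j => IHR j + 1)

/-- `winsF G true` : Left, moving first, wins `G` in misère play
    (a Left end-like position is a first-player win for Left).
    `winsF G false` : Right, moving first, wins `G`. -/
def winsF : Aug → Bool → Prop := by
  intro G
  induction G with
  | mk m n L R tl tr IHL IHR =>
    intro b
    exact match b with
      | true => tl = true ∨ m = 0 ∨ ∃ i, ¬ IHL i false
      | false => tr = true ∨ n = 0 ∨ ∃ j, ¬ IHR j true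

/-- Left outcome is `L`. -/
def oL (G : Aug) : Prop := winsF G true

/-- Right outcome is `L` (Left, moving second, wins). -/
def oR (G : Aug) : Prop := ¬ winsF G false

/-- `outcome G ≥ outcome H` in the misère partial order of outcomes
    (Left prefers larger). -/
def outGe (G H : Aug) : Prop := (oL H → oL G) ∧ (oR H → oR G)

/-- `outcome G = outcome H`. -/
def outEq (G H : Aug) : Prop := (oL G ↔ oL H) ∧ (oR G ↔ oR H)

/-- `G ≥_A H`. -/
def geA (A : Set Aug) (G H : Aug) : Prop := ∀ X ∈ A, outGe (G + X) (H + X)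

/-- `G ≡_A H`. -/
def equivA (A : Set Aug) (G H : Aug) : Prop := ∀ X ∈ A, outEq (G + X) (H + X)

def LeftEnd (G : Aug) : Prop := G.numL = 0
def RightEnd (G : Aug) : Prop := G.numR = 0
def LeftEndLike (G : Aug) : Prop := G.tombL = true ∨ G.numL = 0
def RightEndLike (G : Aug) : Prop := G.tombR = true ∨ G.numR = 0

/-- `G` is Left `A`-strong. -/
def LeftStrong (A : Set Aug) (G : Aug) : Prop :=
  ∀ X ∈ A, LeftEnd X → winsF (G + X) true

/-- `G` is Right `A`-strong. -/
def RightStrong (A : Set Aug) (G : Aug) : Prop :=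
  ∀ X ∈ A, RightEnd X → winsF (G + X) false

/-- Hereditarily closed set of games. -/
def Hereditary (A : Set Aug) : Prop :=
  ∀ G ∈ A, (∀ i, G.moveL i ∈ A) ∧ (∀ j, G.moveR j ∈ A)

/-- An (absolute) universe of misère games. -/
structure IsUniverse (U : Set Aug) : Prop where
  games : ∀ G ∈ U, IsGame G
  zero_mem : (0 : Aug) ∈ U
  add_mem : ∀ G ∈ U, ∀ H ∈ U, G + H ∈ U
  conj_mem : ∀ G ∈ U, conj G ∈ U
  moveL_mem : ∀ G ∈ U, ∀ i, G.moveL i ∈ U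
  moveR_mem : ∀ G ∈ U, ∀ j, G.moveR j ∈ U
  dicotic : ∀ (m n : ℕ) (L : Fin m → Aug) (R : Fin n → Aug), 0 < m → 0 < n →
    (∀ i, L i ∈ U) → (∀ j, R j ∈ U) → mk m n L R false false ∈ U

/-- `Û`: the augmented forms admitting a `U`-expansion, i.e. equivalent
    modulo `U` to some member of `U`. -/
def hatU (U : Set Aug) : Set Aug := {G | ∃ G' ∈ U, equivA U G G'}

/-- `G` is `A`-invertible (with inverse in `A`). -/
def Invertible (A : Set Aug) (G : Aug) : Prop := ∃ H ∈ A, equivA A (G + H) 0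

/-- `G` is `U`-invertible with inverse in `Û`. -/
def InvertibleHat (U : Set Aug) (G : Aug) : Prop := ∃ H ∈ hatU U, equivA U (G + H) 0

/-- `G` is conjugate `A`-invertible. -/
def ConjInvertible (A : Set Aug) (G : Aug) : Prop :=
  conj G ∈ A ∧ equivA A (G + conj G) 0

/-- `A` is a monoid of games: a set of games containing `0`, closed under
    disjunctive sum, on which `≡_A` is a congruence. -/
structure IsMonoidOfGames (A : Set Aug) : Prop where
  games : ∀ G ∈ A, IsGame G
  zero_mem : (0 : Aug) ∈ A
  add_mem : ∀ G ∈ A, ∀ H ∈ A, G + H ∈ A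
  congr : ∀ G ∈ A, ∀ H ∈ A, ∀ J ∈ A, equivA A G H → equivA A (G + J) (H + J)

/-- `U`-simplest form: hereditarily, no dominated options, no reversible
    options, and no unnecessary tombstones. -/
def Simplest (U : Set Aug) : Aug → Prop := by
  intro G
  induction G with
  | mk m n L R tl tr IHL IHR =>
    exact
      (∀ i i' : Fin m, geA U (L i) (L i') → i = i') ∧
      (∀ j j' : Fin n, geA U (R j) (R j') → j = j') ∧
      (∀ i : Fin m, ∀ jj : Fin (L i).numR, ¬ geA U (mk m n L R tl tr) ((L i).moveR jj)) ∧
      (∀ j : Fin n, ∀ ii : Fin (R j).numL, ¬ geA U ((R j).moveL ii) (mk m n L R tl tr)) ∧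
      (tl = true → ¬ equivA U (mk m n L R tl tr) (mk m n L R false tr)) ∧
      (tr = true → ¬ equivA U (mk m n L R tl tr) (mk m n L R tl false)) ∧
      (∀ i, IHL i) ∧ (∀ j, IHR j)

lemma birthday_mk (m n : ℕ) (L : Fin m → Aug) (R : Fin n → Aug) (tl tr : Bool) :
    birthday (mk m n L R tl tr) =
      max (Finset.univ.sup fun i => birthday (L i) + 1)
          (Finset.univ.sup fun j => birthday (R j) + 1) := rfl

lemma birthday_moveL_lt : ∀ (G : Aug) (i : Fin G.numL), birthday (G.moveL i) < birthday G := by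
  intro G
  cases G with
  | mk m n L R tl tr =>
    intro i
    show birthday (L i) < birthday (mk m n L R tl tr)
    rw [birthday_mk]
    have h1 : birthday (L i) + 1 ≤ Finset.univ.sup (fun i => birthday (L i) + 1) :=
      Finset.le_sup (f := fun i => birthday (L i) + 1) (Finset.mem_univ i)
    exact lt_of_lt_of_le (Nat.lt_succ_self _) (h1.trans (le_max_left _ _))

lemma birthday_moveR_lt : ∀ (G : Aug) (j : Fin G.numR), birthday (G.moveR j) < birthday G := by
  intro G
  cases G with
  | mk m n L R tl tr =>
    intro j
    show birthday (R j) < birthday (mk m n L R tl tr)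
    rw [birthday_mk]
    have h1 : birthday (R j) + 1 ≤ Finset.univ.sup (fun j => birthday (R j) + 1) :=
      Finset.le_sup (f := fun j => birthday (R j) + 1) (Finset.mem_univ j)
    exact lt_of_lt_of_le (Nat.lt_succ_self _) (h1.trans (le_max_right _ _))

/-- A disintegrator. -/
def Disintegrator (G : Aug) : Prop :=
  ∃ j : Fin G.numR, (G.moveR j).numL ≠ 0 ∧
    ∀ i : Fin (G.moveR j).numL,
      ¬ winsF ((G.moveR j).moveL i) true ∨ Disintegrator ((G.moveR j).moveL i)
termination_by birthday G
decreasing_by exact lt_trans (birthday_moveL_lt _ _) (birthday_moveR_lt _ _)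

/-- A starkiller. -/
def Starkiller (G : Aug) : Prop :=
  ∃ j : Fin G.numR, winsF (G.moveR j) false ∧
    ∀ i : Fin (G.moveR j).numL,
      ¬ winsF ((G.moveR j).moveL i) true ∨ Starkiller ((G.moveR j).moveL i)
termination_by birthday G
decreasing_by exact lt_trans (birthday_moveL_lt _ _) (birthday_moveR_lt _ _)

def one : Aug := mk 1 0 (fun _ => 0) Fin.elim0 false false
def two : Aug := mk 1 0 (fun _ => one) Fin.elim0 false false
def star : Aug := mk 1 1 (fun _ => 0) (fun _ => 0) false false
/-- `conjugate(1) = {·|0}`. -/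
def oneConj : Aug := mk 0 1 Fin.elim0 (fun _ => 0) false false
/-- `{·|2}`. -/
def endTwo : Aug := mk 0 1 Fin.elim0 (fun _ => two) false false

/-- `n` copies of `G` summed. -/
noncomputable def nCopies : ℕ → Aug → Aug
  | 0, _ => 0
  | n + 1, G => nCopies n G + G

/-- Dicot: every subposition has both or neither kind of option. -/
def Dicot : Aug → Prop := by
  intro G
  induction G with
  | mk m n L R _ _ IHL IHR => exact (m = 0 ↔ n = 0) ∧ (∀ i, IHL i) ∧ (∀ j, IHR j)

/-- Hereditarily a Left end. -/
def LeftEndHered : Aug → Prop := by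
  intro G
  induction G with
  | mk m n L R _ _ IHL IHR => exact m = 0 ∧ (∀ j, IHR j)

/-- Hereditarily a Right end. -/
def RightEndHered : Aug → Prop := by
  intro G
  induction G with
  | mk m n L R _ _ IHL IHR => exact n = 0 ∧ (∀ i, IHL i)

/-- Dead-ending: once a player has no move in a subposition, that player
    never again has a move. -/
def DeadEnding : Aug → Prop := by
  intro G
  induction G with
  | mk m n L R tl tr IHL IHR =>
    exact (m = 0 → LeftEndHered (mk m n L R tl tr)) ∧
      (n = 0 → RightEndHered (mk m n L R tl tr)) ∧
      (∀ i, IHL i) ∧ (∀ j, IHR j)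

/-- Left weak set of games. -/
def LeftWeak (A : Set Aug) : Prop := ∀ G : Aug, LeftStrong A G ↔ LeftEndLike G

/-- Right weak set of games. -/
def RightWeak (A : Set Aug) : Prop := ∀ G : Aug, RightStrong A G ↔ RightEndLike G

end Aug

/-
Right's first move in `* + X` is either to `0 + X = X`, which Left wins moving first by
hypothesis, or to `* + X^R`. If Right, moving first, loses `X^R`, Left answers by moving `*`
to `0`. Otherwise, since `X` is not a starkiller, `X^R` has a Left option `X^{RL}` that Left
wins moving first and that is not a starkiller, and Left answers by moving to `* + X^{RL}`,
which Right loses moving first by induction on the birthday.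
-/

namespace Aug

lemma mk_congr {m n m' n' : ℕ} {L : Fin m → Aug} {R : Fin n → Aug} {L' : Fin m' → Aug}
    {R' : Fin n' → Aug} {tl tr : Bool} (hm : m = m') (hn : n = n')
    (hL : ∀ i, L i = L' (Fin.cast hm i)) (hR : ∀ j, R j = R' (Fin.cast hn j)) :
    mk m n L R tl tr = mk m' n' L' R' tl tr := by
  subst hm hn
  congr
  · exact funext hL
  · exact funext hR

lemma add_mk (m n : ℕ) (L : Fin m → Aug) (R : Fin n → Aug) (tl tr : Bool)
    (m' n' : ℕ) (L' : Fin m' → Aug) (R' : Fin n' → Aug) (tl' tr' : Bool) :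
    mk m n L R tl tr + mk m' n' L' R' tl' tr' =
      mk (m + m') (n + n')
        (Fin.addCases (fun i => L i + mk m' n' L' R' tl' tr') (fun j => mk m n L R tl tr + L' j))
        (Fin.addCases (fun i => R i + mk m' n' L' R' tl' tr') (fun j => mk m n L R tl tr + R' j))
        (tl || tl') (tr || tr') := rfl

protected lemma zero_add (G : Aug) : 0 + G = G := by
  induction G with
  | mk m n L R tl tr IHL IHR =>
    refine (add_mk 0 0 Fin.elim0 Fin.elim0 false false m n L R tl tr).trans
      (mk_congr (Nat.zero_add m) (Nat.zero_add n) (fun i => ?_) (fun j => ?_))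
    · obtain ⟨i, rfl⟩ : ∃ i', Fin.natAdd 0 i' = i :=
        ⟨Fin.cast (Nat.zero_add m) i, Fin.ext (by simp)⟩
      rw [Fin.addCases_right]
      exact (IHL i).trans (congrArg L (Fin.ext (by simp)))
    · obtain ⟨j, rfl⟩ : ∃ j', Fin.natAdd 0 j' = j :=
        ⟨Fin.cast (Nat.zero_add n) j, Fin.ext (by simp)⟩
      rw [Fin.addCases_right]
      exact (IHR j).trans (congrArg R (Fin.ext (by simp)))

lemma winsF_mk_true (m n : ℕ) (L : Fin m → Aug) (R : Fin n → Aug) (tl tr : Bool) :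
    winsF (mk m n L R tl tr) true ↔ (tl = true ∨ m = 0 ∨ ∃ i, ¬ winsF (L i) false) := Iff.rfl

lemma winsF_mk_false (m n : ℕ) (L : Fin m → Aug) (R : Fin n → Aug) (tl tr : Bool) :
    winsF (mk m n L R tl tr) false ↔ (tr = true ∨ n = 0 ∨ ∃ j, ¬ winsF (R j) true) := Iff.rfl

lemma winsF_true_add_of_moveL_left {G H : Aug} (i : Fin G.numL)
    (h : ¬ winsF (G.moveL i + H) false) : winsF (G + H) true := by
  cases G with
  | mk m n L R tl tr =>
    cases H with
    | mk m' n' L' R' tl' tr' =>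
      change Fin m at i
      rw [add_mk, winsF_mk_true]
      exact Or.inr (Or.inr ⟨Fin.castAdd m' i, by rwa [Fin.addCases_left]⟩)

lemma winsF_true_add_of_moveL_right {G H : Aug} (i : Fin H.numL)
    (h : ¬ winsF (G + H.moveL i) false) : winsF (G + H) true := by
  cases G with
  | mk m n L R tl tr =>
    cases H with
    | mk m' n' L' R' tl' tr' =>
      change Fin m' at i
      rw [add_mk, winsF_mk_true]
      exact Or.inr (Or.inr ⟨Fin.natAdd m i, by rwa [Fin.addCases_right]⟩)

lemma not_winsF_false_add {G H : Aug} (hG : G.tombR = false) (hH : H.tombR = false)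
    (hn : G.numR + H.numR ≠ 0) (hGR : ∀ j, winsF (G.moveR j + H) true)
    (hHR : ∀ j, winsF (G + H.moveR j) true) : ¬ winsF (G + H) false := by
  cases G with
  | mk m n L R tl tr =>
    cases H with
    | mk m' n' L' R' tl' tr' =>
      rw [add_mk, winsF_mk_false]
      push Not
      refine ⟨ne_true_of_eq_false (Bool.or_eq_false_iff.mpr ⟨hG, hH⟩), hn, fun j => ?_⟩
      induction j using Fin.addCases with
      | left j => rw [Fin.addCases_left]; exact hGR j
      | right j => rw [Fin.addCases_right]; exact hHR j

lemma IsGame.tombR_eq_false {G : Aug} (h : IsGame G) : G.tombR = false := by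
  cases G
  exact h.2.1

lemma IsGame.moveL {G : Aug} (h : IsGame G) (i : Fin G.numL) : IsGame (G.moveL i) := by
  cases G
  exact h.2.2.1 i

lemma IsGame.moveR {G : Aug} (h : IsGame G) (j : Fin G.numR) : IsGame (G.moveR j) := by
  cases G
  exact h.2.2.2 j

lemma exists_moveL_of_not_starkiller {G : Aug} (h : ¬ Starkiller G) (j : Fin G.numR)
    (hj : winsF (G.moveR j) false) :
    ∃ i, winsF ((G.moveR j).moveL i) true ∧ ¬ Starkiller ((G.moveR j).moveL i) := by
  rw [Starkiller] at h
  push Not at h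
  exact h j hj

end Aug

/-- if `X` has Left outcome `L` and is not a starkiller, then
Left, moving second, wins `* + X`. -/
theorem stmt15 (X : Aug) (hX : Aug.IsGame X) (hL : Aug.winsF X true)
    (h : ¬ Aug.Starkiller X) :
    ¬ Aug.winsF (Aug.star + X) false := by
  refine Aug.not_winsF_false_add rfl hX.tombR_eq_false (by simp [Aug.star, Aug.numR])
    (fun _ => by rw [← Aug.zero_add X] at hL; exact hL) (fun j => ?_)
  by_cases hR : Aug.winsF (X.moveR j) false
  · obtain ⟨i, hLi, hSi⟩ := Aug.exists_moveL_of_not_starkiller h j hR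
    exact Aug.winsF_true_add_of_moveL_right i (stmt15 _ ((hX.moveR j).moveL i) hLi hSi)
  · rw [← Aug.zero_add (X.moveR j)] at hR
    exact Aug.winsF_true_add_of_moveL_left (G := Aug.star) (0 : Fin 1) hR
termination_by X.birthday
decreasing_by exact (Aug.birthday_moveL_lt _ i).trans (Aug.birthday_moveR_lt X j)
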